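/- arXiv:2401.04659 — 5 statements merged into one kernel-verified Lean document; each statement's English description precedes it below -/
import Mathlib

section
/- For the L²-normalized Gaussian φ(x) = 2^{d/4} e^{-π|x|²} on ℝ^d, and its time-frequency shifts φ_z(x) = e^{2πi ω₀·x} φ(x - x₀) for z = (x₀, ω₀) ∈ ℝ^{2d}, the squared modulus of the inner product satisfies |⟨φ_z, φ_w⟩_{L²(ℝ^d)}|² = e^{-π|z-w|²} for all z, w ∈ ℝ^{2d}. -/
open MeasureTheory Real Complex

/-- The L²-normalized Gaussian window on ℝ^d. -/
noncomputable def gaussWindow (d : ℕ) (x : EuclideanSpace ℝ (Fin d)) : ℂ :=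
  (2 : ℂ) ^ ((d : ℂ) / 4) * Complex.exp (-(π : ℂ) * (‖x‖ : ℂ) ^ 2)

/-- The time-frequency shift φ_z of the Gaussian window, z = (x₀, ω₀). -/
noncomputable def tfShiftGauss (d : ℕ)
    (z : EuclideanSpace ℝ (Fin d) × EuclideanSpace ℝ (Fin d))
    (x : EuclideanSpace ℝ (Fin d)) : ℂ :=
  Complex.exp (2 * (π : ℂ) * Complex.I * (inner ℝ z.2 x : ℝ)) * gaussWindow d (x - z.1)


/-!
Translating by the midpoint `m` of `z.1` and `w.1`, the parallelogram law turns the product of the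
two windows into `2^{d/2} e^{-π|z.1 - w.1|²/2} e^{-2π|x|²}`, and the modulations combine into
the character `e^{2πi⟨z.2 - w.2, x⟩}` times the unimodular constant `e^{2πi⟨z.2 - w.2, m⟩}`.
What is left is the Fourier transform of a Gaussian, which equals
`2^{-d/2} e^{-π|z.2 - w.2|²/2}`.
-/

open scoped ComplexConjugate InnerProductSpace

section

variable {d : ℕ}

lemma gaussWindow_eq_ofReal (x : EuclideanSpace ℝ (Fin d)) :
    gaussWindow d x = ((2 ^ ((d : ℝ) / 4) * Real.exp (-π * ‖x‖ ^ 2) : ℝ) : ℂ) := by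
  rw [gaussWindow, ofReal_mul, ofReal_cpow zero_le_two, ofReal_exp]
  push_cast
  rfl

lemma conj_gaussWindow (x : EuclideanSpace ℝ (Fin d)) :
    conj (gaussWindow d x) = gaussWindow d x := by
  rw [gaussWindow_eq_ofReal, conj_ofReal]

lemma gaussWindow_sub_mul_gaussWindow_add (x a : EuclideanSpace ℝ (Fin d)) :
    gaussWindow d (x - a) * gaussWindow d (x + a) =
      ((2 ^ ((d : ℝ) / 2) * Real.exp (-2 * π * ‖a‖ ^ 2) : ℝ) : ℂ) *
        cexp (-(2 * π) * ‖x‖ ^ 2) := by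
  have hpar : ‖x - a‖ ^ 2 + ‖x + a‖ ^ 2 = 2 * ‖x‖ ^ 2 + 2 * ‖a‖ ^ 2 := by
    rw [norm_sub_sq_real, norm_add_sq_real]; ring
  have h2 : (2 : ℝ) ^ ((d : ℝ) / 4) * 2 ^ ((d : ℝ) / 4) = 2 ^ ((d : ℝ) / 2) := by
    rw [← Real.rpow_add two_pos]; ring_nf
  have hexp : cexp (-(2 * π) * ‖x‖ ^ 2) = (Real.exp (-2 * π * ‖x‖ ^ 2) : ℂ) := by
    push_cast; ring_nf
  rw [gaussWindow_eq_ofReal, gaussWindow_eq_ofReal, hexp, ← ofReal_mul, ← ofReal_mul]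
  congr 1
  calc _ = (2 : ℝ) ^ ((d : ℝ) / 4) * 2 ^ ((d : ℝ) / 4) *
        Real.exp (-π * (‖x - a‖ ^ 2 + ‖x + a‖ ^ 2)) := by
        rw [mul_add, Real.exp_add]; ring
    _ = _ := by rw [h2, hpar, mul_assoc, ← Real.exp_add]; ring_nf

lemma tfShiftGauss_mul_conj (z w : EuclideanSpace ℝ (Fin d) × EuclideanSpace ℝ (Fin d))
    (x : EuclideanSpace ℝ (Fin d)) :
    tfShiftGauss d z x * conj (tfShiftGauss d w x) =
      cexp (2 * π * I * ⟪z.2 - w.2, x⟫_ℝ) *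
        (gaussWindow d (x - z.1) * gaussWindow d (x - w.1)) := by
  have hphase : conj (cexp (2 * π * I * ⟪w.2, x⟫_ℝ)) = cexp (-(2 * π * I * ⟪w.2, x⟫_ℝ)) := by
    rw [← exp_conj, map_mul, conj_ofReal, map_mul, conj_I, map_mul, conj_ofReal, map_ofNat]; ring_nf
  rw [inner_sub_left, ofReal_sub, mul_sub, sub_eq_add_neg, Complex.exp_add]
  simp only [tfShiftGauss, map_mul, conj_gaussWindow, hphase]
  ring

lemma tfShiftGauss_mul_conj_add_midpoint
    (z w : EuclideanSpace ℝ (Fin d) × EuclideanSpace ℝ (Fin d)) (x : EuclideanSpace ℝ (Fin d)) :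
    tfShiftGauss d z (x + midpoint ℝ z.1 w.1) * conj (tfShiftGauss d w (x + midpoint ℝ z.1 w.1)) =
      cexp (2 * π * I * ⟪z.2 - w.2, midpoint ℝ z.1 w.1⟫_ℝ) *
        ((2 ^ ((d : ℝ) / 2) * Real.exp (-π / 2 * ‖z.1 - w.1‖ ^ 2) : ℝ) : ℂ) *
        cexp (-(2 * π) * ‖x‖ ^ 2 + 2 * π * I * ⟪z.2 - w.2, x⟫_ℝ) := by
  set a := (2⁻¹ : ℝ) • (z.1 - w.1)
  have hz : x + midpoint ℝ z.1 w.1 - z.1 = x - a := by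
    rw [midpoint_eq_smul_add, invOf_eq_inv]; module
  have hw : x + midpoint ℝ z.1 w.1 - w.1 = x + a := by
    rw [midpoint_eq_smul_add, invOf_eq_inv]; module
  have ha : -2 * π * ‖a‖ ^ 2 = -π / 2 * ‖z.1 - w.1‖ ^ 2 := by
    rw [norm_smul, Real.norm_of_nonneg (by norm_num)]; ring
  rw [tfShiftGauss_mul_conj, hz, hw, gaussWindow_sub_mul_gaussWindow_add, ha, inner_add_right,
    ofReal_add, mul_add, Complex.exp_add, Complex.exp_add]
  ring

lemma integral_tfShiftGauss_mul_conj (z w : EuclideanSpace ℝ (Fin d) × EuclideanSpace ℝ (Fin d)) :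
    ∫ x, tfShiftGauss d z x * conj (tfShiftGauss d w x) =
      cexp (2 * π * I * ⟪z.2 - w.2, midpoint ℝ z.1 w.1⟫_ℝ) *
        Real.exp (-π / 2 * (‖z.1 - w.1‖ ^ 2 + ‖z.2 - w.2‖ ^ 2)) := by
  rw [← integral_add_right_eq_self _ (midpoint ℝ z.1 w.1)]
  simp_rw [tfShiftGauss_mul_conj_add_midpoint]
  rw [integral_const_mul, GaussianFourier.integral_cexp_neg_mul_sq_norm_add (by simp [pi_pos]),
    finrank_euclideanSpace_fin]
  have hvol : ((π : ℂ) / (2 * π)) ^ ((d : ℂ) / 2) = ((2 ^ ((d : ℝ) / 2))⁻¹ : ℝ) := by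
    have hhalf : (π : ℂ) / (2 * π) = ((2⁻¹ : ℝ) : ℂ) := by
      push_cast; field_simp [ofReal_ne_zero.2 pi_ne_zero]
    rw [hhalf, ← Real.inv_rpow zero_le_two, ofReal_cpow (by norm_num)]
    push_cast; rfl
  have hfreq : cexp ((2 * π * I) ^ 2 * ‖z.2 - w.2‖ ^ 2 / (4 * (2 * π))) =
      Real.exp (-π / 2 * ‖z.2 - w.2‖ ^ 2) := by
    push_cast
    congr 1
    field_simp [ofReal_ne_zero.2 pi_ne_zero]
    linear_combination (4 * ‖z.2 - w.2‖ ^ 2 : ℂ) * I_sq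
  rw [hvol, hfreq, mul_assoc, ← ofReal_mul, ← ofReal_mul]
  congr 3
  rw [mul_add, Real.exp_add]
  field_simp

end

theorem sq_abs_inner_tfShiftGauss (d : ℕ)
    (z w : EuclideanSpace ℝ (Fin d) × EuclideanSpace ℝ (Fin d)) :
    ‖∫ x : EuclideanSpace ℝ (Fin d),
        tfShiftGauss d z x * (starRingEnd ℂ) (tfShiftGauss d w x)‖ ^ 2
      = Real.exp (-π * (‖z.1 - w.1‖ ^ 2 + ‖z.2 - w.2‖ ^ 2)) := by
  have hphase : ‖cexp (2 * π * I * ⟪z.2 - w.2, midpoint ℝ z.1 w.1⟫_ℝ)‖ = 1 := by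
    rw [norm_exp]; simp
  rw [integral_tfShiftGauss_mul_conj, norm_mul, hphase, one_mul,
    Complex.norm_of_nonneg (Real.exp_pos _).le, ← Real.exp_nat_mul]
  ring_nf
end

section
/- Let (X, μ) be a σ-finite measure space, H a separable Hilbert space, and x ↦ φ_x a map from X to H such that x ↦ ⟨f, φ_x⟩ is measurable for every f ∈ H and ‖φ_x‖ ≤ c₁ for a.e. x ∈ X. Then for every F ∈ L¹(X) the operator L_F defined weakly by ⟨L_F f, g⟩ = ∫_X F(x) ⟨f, φ_x⟩ ⟨φ_x, g⟩ dμ(x) is trace class, with trace tr L_F = ∫_X F(x) ‖φ_x‖² dμ(x). -/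
/-!
Testing `L_F` against orthonormal sequences `e`, `f` gives
`|⟨e n, L_F (f n)⟩| ≤ ∫ |F x| |⟨φ_x, f n⟩| |⟨e n, φ_x⟩| dμ`, and by Cauchy–Schwarz and Bessel
`∑ₙ |⟨φ_x, f n⟩| |⟨e n, φ_x⟩| ≤ ‖φ_x‖² ≤ c₁²`, so the whole series is dominated by
`c₁² ‖F‖₁`. The same domination justifies exchanging sum and integral for a Hilbert basis,
after which Parseval's identity `∑ᵢ |⟨bᵢ, φ_x⟩|² = ‖φ_x‖²` computes the trace.
-/

open MeasureTheory

local notation "⟪" x ", " y "⟫" => @inner ℂ _ _ x y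

/-- A bounded operator `T` on a Hilbert space is trace class iff for every pair of
orthonormal sequences `(e n)`, `(f n)` the series `∑ |⟪e n, T (f n)⟫|` converges. -/
def IsTraceClassOp {H : Type*} [NormedAddCommGroup H] [InnerProductSpace ℂ H]
    (T : H →L[ℂ] H) : Prop :=
  ∀ e f : ℕ → H, Orthonormal ℂ e → Orthonormal ℂ f →
    Summable fun n => ‖⟪e n, T (f n)⟫‖

theorem Orthonormal.sum_norm_inner_mul_norm_inner_le {𝕜 E ι : Type*} [RCLike 𝕜]
    [NormedAddCommGroup E] [InnerProductSpace 𝕜 E] {e f : ι → E}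
    (he : Orthonormal 𝕜 e) (hf : Orthonormal 𝕜 f) (s : Finset ι) (x y : E) :
    ∑ i ∈ s, ‖inner 𝕜 (e i) x‖ * ‖inner 𝕜 (f i) y‖ ≤ ‖x‖ * ‖y‖ := by
  have hbessel {v : ι → E} (hv : Orthonormal 𝕜 v) (z : E) :
      √(∑ i ∈ s, ‖inner 𝕜 (v i) z‖ ^ 2) ≤ ‖z‖ :=
    Real.sqrt_le_left (norm_nonneg z) |>.mpr (hv.sum_inner_products_le z)
  calc ∑ i ∈ s, ‖inner 𝕜 (e i) x‖ * ‖inner 𝕜 (f i) y‖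
      ≤ √(∑ i ∈ s, ‖inner 𝕜 (e i) x‖ ^ 2) * √(∑ i ∈ s, ‖inner 𝕜 (f i) y‖ ^ 2) :=
        Real.sum_mul_le_sqrt_mul_sqrt s _ _
    _ ≤ ‖x‖ * ‖y‖ := mul_le_mul (hbessel he x) (hbessel hf y) (by positivity) (norm_nonneg x)

theorem Orthonormal.tsum_enorm_inner_mul_enorm_inner_le {𝕜 E ι : Type*} [RCLike 𝕜]
    [NormedAddCommGroup E] [InnerProductSpace 𝕜 E] {e f : ι → E}
    (he : Orthonormal 𝕜 e) (hf : Orthonormal 𝕜 f) (x y : E) :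
    ∑' i, ‖inner 𝕜 (e i) x‖ₑ * ‖inner 𝕜 (f i) y‖ₑ ≤ ‖x‖ₑ * ‖y‖ₑ := by
  refine ENNReal.summable.tsum_le_of_sum_le fun s => ?_
  simp only [← ofReal_norm, ← ENNReal.ofReal_mul (norm_nonneg _)]
  rw [← ENNReal.ofReal_sum_of_nonneg fun i _ => by positivity]
  exact ENNReal.ofReal_le_ofReal (he.sum_norm_inner_mul_norm_inner_le hf s x y)

section Integration

variable {X ι E : Type*} [MeasurableSpace X] {μ : Measure X} [NormedAddCommGroup E]

theorem summable_norm_integral_of_tsum_lintegral_enorm_ne_top [NormedSpace ℝ E]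
    {h : ι → X → E} (hh : ∑' i, ∫⁻ x, ‖h i x‖ₑ ∂μ ≠ ⊤) :
    Summable fun i => ‖∫ x, h i x ∂μ‖ := by
  refine (ENNReal.summable_toReal (ne_top_of_le_ne_top hh ?_)).congr fun i => toReal_enorm _
  exact ENNReal.tsum_le_tsum fun i => enorm_integral_le_lintegral_enorm _

theorem tsum_lintegral_enorm_ne_top_of_ae_tsum_le {G : Type*} [NormedAddCommGroup G]
    [Countable ι] {h : ι → X → E} {g : X → G} (hh : ∀ i, AEStronglyMeasurable (h i) μ)
    (hg : HasFiniteIntegral g μ) (hle : ∀ᵐ x ∂μ, ∑' i, ‖h i x‖ₑ ≤ ‖g x‖ₑ) :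
    ∑' i, ∫⁻ x, ‖h i x‖ₑ ∂μ ≠ ⊤ := by
  rw [← lintegral_tsum fun i => (hh i).enorm]
  exact ne_top_of_le_ne_top hg.ne (lintegral_mono_ae hle)

end Integration

section Localization

variable {X H ι : Type*} [MeasurableSpace X] {μ : Measure X}
  [NormedAddCommGroup H] [InnerProductSpace ℂ H]

theorem tsum_enorm_mul_inner_mul_inner_le {e f : ι → H} (he : Orthonormal ℂ e)
    (hf : Orthonormal ℂ f) (z : ℂ) (v : H) :
    ∑' i, ‖z * ⟪v, f i⟫ * ⟪e i, v⟫‖ₑ ≤ ‖z‖ₑ * ‖v‖ₑ ^ 2 := by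
  have hsymm (i : ι) : ‖⟪v, f i⟫‖ₑ = ‖⟪f i, v⟫‖ₑ := by
    rw [← ofReal_norm, norm_inner_symm, ofReal_norm]
  simp only [enorm_mul, mul_assoc, ENNReal.tsum_mul_left, hsymm]
  gcongr
  exact (hf.tsum_enorm_inner_mul_enorm_inner_le he v v).trans_eq (sq _).symm

theorem HilbertBasis.tsum_mul_inner_mul_inner (b : HilbertBasis ι ℂ H) (z : ℂ) (v : H) :
    ∑' i, z * ⟪v, b i⟫ * ⟪b i, v⟫ = z * (‖v‖ : ℂ) ^ 2 := by
  simp_rw [mul_assoc]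
  rw [tsum_mul_left, b.tsum_inner_mul_inner, inner_self_eq_norm_sq_to_K]
  rfl

theorem Measurable.inner_flip {φ : X → H} {g : H} (h : Measurable fun x => ⟪φ x, g⟫) :
    Measurable fun x => ⟪g, φ x⟫ := by
  simpa only [Function.comp_def, inner_conj_symm] using
    Complex.continuous_conj.measurable.comp h

theorem aestronglyMeasurable_mul_inner_mul_inner {φ : X → H} {F : X → ℂ}
    (hmeas : ∀ f : H, Measurable fun x => ⟪φ x, f⟫) (hF : AEStronglyMeasurable F μ)
    (f g : H) : AEStronglyMeasurable (fun x => F x * ⟪φ x, f⟫ * ⟪g, φ x⟫) μ :=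
  (hF.mul (hmeas f).aestronglyMeasurable).mul (hmeas g).inner_flip.aestronglyMeasurable

theorem tsum_lintegral_enorm_mul_inner_mul_inner_ne_top [Countable ι] {φ : X → H} {c₁ : ℝ}
    {F : X → ℂ} (hmeas : ∀ f : H, Measurable fun x => ⟪φ x, f⟫)
    (hbdd : ∀ᵐ x ∂μ, ‖φ x‖ ≤ c₁) (hF : Integrable F μ) {e f : ι → H}
    (he : Orthonormal ℂ e) (hf : Orthonormal ℂ f) :
    ∑' i, ∫⁻ x, ‖F x * ⟪φ x, f i⟫ * ⟪e i, φ x⟫‖ₑ ∂μ ≠ ⊤ := by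
  refine tsum_lintegral_enorm_ne_top_of_ae_tsum_le
    (fun i => aestronglyMeasurable_mul_inner_mul_inner hmeas hF.1 _ _)
    (hF.norm.const_mul (c₁ ^ 2)).2 ?_
  filter_upwards [hbdd] with x hx
  refine (tsum_enorm_mul_inner_mul_inner_le he hf _ _).trans ?_
  rw [Real.enorm_of_nonneg (by positivity), ← ofReal_norm, ← ofReal_norm,
    ← ENNReal.ofReal_pow (norm_nonneg _), ← ENNReal.ofReal_mul (norm_nonneg _), mul_comm]
  gcongr

end Localization

theorem localization_op_traceClass_general
    {X : Type*} [MeasurableSpace X] (μ : Measure X)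
    {H : Type*} [NormedAddCommGroup H] [InnerProductSpace ℂ H]
    (φ : X → H) (c₁ : ℝ)
    (hmeas : ∀ f : H, Measurable fun x => ⟪φ x, f⟫)
    (hbdd : ∀ᵐ x ∂μ, ‖φ x‖ ≤ c₁)
    (F : X → ℂ) (hF : Integrable F μ)
    (L : H →L[ℂ] H)
    (hL : ∀ f g : H, ⟪g, L f⟫ = ∫ x, F x * ⟪φ x, f⟫ * ⟪g, φ x⟫ ∂μ) :
    IsTraceClassOp L ∧
      ∀ {ι : Type} [Countable ι] (b : HilbertBasis ι ℂ H),
        ∑' i, ⟪b i, L (b i)⟫ = ∫ x, F x * (‖φ x‖ : ℂ) ^ 2 ∂μ := by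
  refine ⟨fun e f he hf => ?_, fun b => ?_⟩
  · simpa only [hL] using summable_norm_integral_of_tsum_lintegral_enorm_ne_top
      (tsum_lintegral_enorm_mul_inner_mul_inner_ne_top hmeas hbdd hF he hf)
  · calc ∑' i, ⟪b i, L (b i)⟫ = ∑' i, ∫ x, F x * ⟪φ x, b i⟫ * ⟪b i, φ x⟫ ∂μ :=
          tsum_congr fun i => hL (b i) (b i)
      _ = ∫ x, ∑' i, F x * ⟪φ x, b i⟫ * ⟪b i, φ x⟫ ∂μ :=
          (integral_tsum (fun i => aestronglyMeasurable_mul_inner_mul_inner hmeas hF.1 _ _)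
            (tsum_lintegral_enorm_mul_inner_mul_inner_ne_top hmeas hbdd hF
              b.orthonormal b.orthonormal)).symm
      _ = ∫ x, F x * (‖φ x‖ : ℂ) ^ 2 ∂μ := by
          simp only [b.tsum_mul_inner_mul_inner]

theorem localization_op_traceClass
    {X : Type*} [MeasurableSpace X] (μ : Measure X) [SigmaFinite μ]
    {H : Type*} [NormedAddCommGroup H] [InnerProductSpace ℂ H] [CompleteSpace H]
    [TopologicalSpace.SeparableSpace H]
    (φ : X → H) (c₁ : ℝ)
    (hmeas : ∀ f : H, Measurable fun x => ⟪φ x, f⟫)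
    (hbdd : ∀ᵐ x ∂μ, ‖φ x‖ ≤ c₁)
    (F : X → ℂ) (hF : Integrable F μ)
    (L : H →L[ℂ] H)
    (hL : ∀ f g : H, ⟪g, L f⟫ = ∫ x, F x * ⟪φ x, f⟫ * ⟪g, φ x⟫ ∂μ) :
    IsTraceClassOp L ∧
      ∀ {ι : Type} [Countable ι] (b : HilbertBasis ι ℂ H),
        ∑' i, ⟪b i, L (b i)⟫ = ∫ x, F x * (‖φ x‖ : ℂ) ^ 2 ∂μ :=
  localization_op_traceClass_general μ φ c₁ hmeas hbdd F hF L hL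
end

section
/- Under the same hypotheses (weak measurability of x ↦ φ_x and ‖φ_x‖ ≤ c₁ a.e.), for F ∈ L¹(X) the Hilbert-Schmidt norm of L_F satisfies ‖L_F‖²_{HS} = ∫_{X×X} F(x) |⟨φ_x, φ_y⟩|² conj(F(y)) dμ(x) dμ(y). -/
/-!
Expand `‖L bᵢ‖² = ⟪L bᵢ, L bᵢ⟫` by the weak definition of `L`, with the second factor written as
`⟪bᵢ, L† φₓ⟫`. Summing over `i` under the integral against `F` is Parseval's identity
`∑ᵢ ⟪φₓ, bᵢ⟫ ⟪bᵢ, L† φₓ⟫ = ⟪L φₓ, φₓ⟫`; by Bessel's inequality the absolute series is at most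
`|F x| ‖φₓ‖ ‖L† φₓ‖ ≤ ‖L‖ c₁² |F x|`, which justifies the interchange. The weak definition of `L`
applied once more to `⟪L φₓ, φₓ⟫` gives the inner integral.
-/

open MeasureTheory ComplexConjugate

local notation "⟪" x ", " y "⟫" => @inner ℂ _ _ x y

open scoped ENNReal InnerProduct

namespace HilbertBasis

variable {𝕜 E ι : Type*} [RCLike 𝕜] [NormedAddCommGroup E] [InnerProductSpace 𝕜 E]

theorem tsum_enorm_inner_mul_inner_le (b : HilbertBasis ι 𝕜 E) (x y : E) :
    ∑' i, ‖inner 𝕜 x (b i)‖ₑ * ‖inner 𝕜 (b i) y‖ₑ ≤ ‖x‖ₑ * ‖y‖ₑ := by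
  obtain ⟨hsum, hle⟩ :=
    lp.tsum_mul_le_mul_norm (p := 2) (q := 2) (by norm_num [Real.HolderConjugate.two_two])
      (b.repr x) (b.repr y)
  simp only [b.repr_apply_apply, LinearIsometryEquiv.norm_map, norm_inner_symm (b _) x] at hsum hle
  simp only [← ofReal_norm, ← ENNReal.ofReal_mul (norm_nonneg _)]
  rw [← ENNReal.ofReal_tsum_of_nonneg (fun i => by positivity) hsum]
  exact ENNReal.ofReal_le_ofReal hle

variable {α : Type*} [MeasurableSpace α] {ν : Measure α} [Countable ι]

theorem tsum_integral_inner_mul_inner (b : HilbertBasis ι 𝕜 E) {w : α → 𝕜} {u v : α → E}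
    (hw : AEStronglyMeasurable w ν) (hu : ∀ x, AEStronglyMeasurable (fun a => inner 𝕜 (u a) x) ν)
    (hv : ∀ x, AEStronglyMeasurable (fun a => inner 𝕜 x (v a)) ν)
    (hfin : ∫⁻ a, ‖w a‖ₑ * (‖u a‖ₑ * ‖v a‖ₑ) ∂ν ≠ ∞) :
    ∑' i, ∫ a, w a * (inner 𝕜 (u a) (b i) * inner 𝕜 (b i) (v a)) ∂ν
      = ∫ a, w a * inner 𝕜 (u a) (v a) ∂ν := by
  have hmeas : ∀ i, AEStronglyMeasurable
      (fun a => w a * (inner 𝕜 (u a) (b i) * inner 𝕜 (b i) (v a))) ν :=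
    fun i => hw.mul ((hu _).mul (hv _))
  have hsum_enorm : ∑' i, ∫⁻ a, ‖w a * (inner 𝕜 (u a) (b i) * inner 𝕜 (b i) (v a))‖ₑ ∂ν ≠ ∞ := by
    rw [← lintegral_tsum fun i => (hmeas i).enorm]
    refine ne_top_of_le_ne_top hfin (lintegral_mono fun a => ?_)
    simp only [enorm_mul, ENNReal.tsum_mul_left]
    gcongr
    exact b.tsum_enorm_inner_mul_inner_le _ _
  rw [← integral_tsum hmeas hsum_enorm]
  congr with a
  exact ((b.hasSum_inner_mul_inner (u a) (v a)).mul_left (w a)).tsum_eq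

end HilbertBasis

section LocalizationOperator

variable {X H : Type*} [MeasurableSpace X] {μ : Measure X}
  [NormedAddCommGroup H] [InnerProductSpace ℂ H] [CompleteSpace H]
  {φ : X → H} {F : X → ℂ} {L : H →L[ℂ] H}

theorem localizationOp_norm_sq_apply
    (hL : ∀ f g : H, ⟪g, L f⟫ = ∫ x, F x * ⟪φ x, f⟫ * ⟪g, φ x⟫ ∂μ) (f : H) :
    ((‖L f‖ ^ 2 : ℝ) : ℂ) = ∫ x, F x * (⟪φ x, f⟫ * ⟪f, (L†) (φ x)⟫) ∂μ := by
  rw [← RCLike.ofReal_eq_complex_ofReal, RCLike.ofReal_pow, ← inner_self_eq_norm_sq_to_K, hL]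
  simp only [ContinuousLinearMap.adjoint_inner_right, mul_assoc]

theorem localizationOp_inner_adjoint_apply_self
    (hL : ∀ f g : H, ⟪g, L f⟫ = ∫ x, F x * ⟪φ x, f⟫ * ⟪g, φ x⟫ ∂μ) (g : H) :
    ⟪g, (L†) g⟫ = ∫ y, (‖⟪g, φ y⟫‖ : ℂ) ^ 2 * conj (F y) ∂μ := by
  rw [ContinuousLinearMap.adjoint_inner_right, ← inner_conj_symm, hL, ← integral_conj]
  congr with y
  simp only [map_mul, inner_conj_symm]
  rw [← inner_conj_symm (φ y) g, mul_assoc, Complex.mul_conj']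
  ring

end LocalizationOperator

theorem localization_op_hilbertSchmidt_norm_formula_general
    {X : Type*} [MeasurableSpace X] (μ : Measure X)
    {H : Type*} [NormedAddCommGroup H] [InnerProductSpace ℂ H] [CompleteSpace H]
    (φ : X → H) (c₁ : ℝ)
    (hmeas : ∀ f : H, Measurable fun x => ⟪φ x, f⟫)
    (hbdd : ∀ᵐ x ∂μ, ‖φ x‖ ≤ c₁)
    (F : X → ℂ) (hF : Integrable F μ)
    (L : H →L[ℂ] H)
    (hL : ∀ f g : H, ⟪g, L f⟫ = ∫ x, F x * ⟪φ x, f⟫ * ⟪g, φ x⟫ ∂μ) :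
    ∀ {ι : Type} [Countable ι] (b : HilbertBasis ι ℂ H),
      ((∑' i, ‖L (b i)‖ ^ 2 : ℝ) : ℂ)
        = ∫ x, ∫ y, F x * (‖⟪φ x, φ y⟫‖ : ℂ) ^ 2 * (starRingEnd ℂ) (F y) ∂μ ∂μ := by
  intro ι _ b
  have hfin : ∫⁻ x, ‖F x‖ₑ * (‖φ x‖ₑ * ‖(L†) (φ x)‖ₑ) ∂μ ≠ ∞ := by
    have hbound : ∀ᵐ x ∂μ, ‖F x‖ₑ * (‖φ x‖ₑ * ‖(L†) (φ x)‖ₑ)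
        ≤ ‖F x‖ₑ * (ENNReal.ofReal c₁ * (‖L†‖ₑ * ENNReal.ofReal c₁)) := by
      filter_upwards [hbdd] with x hx
      have hφ : ‖φ x‖ₑ ≤ ENNReal.ofReal c₁ := by
        rw [← ofReal_norm]; exact ENNReal.ofReal_le_ofReal hx
      gcongr
      exact ((L†).le_opENorm _).trans (by gcongr)
    refine ne_top_of_le_ne_top ?_ (lintegral_mono_ae hbound)
    rw [lintegral_mul_const'' _ hF.1.enorm]
    exact ENNReal.mul_ne_top hF.2.ne (by finiteness)
  have hv : ∀ f, AEStronglyMeasurable (fun x => ⟪f, (L†) (φ x)⟫) μ := fun f => by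
    simp only [ContinuousLinearMap.adjoint_inner_right]
    exact (RCLike.continuous_conj.comp_aestronglyMeasurable
      (hmeas (L f)).aestronglyMeasurable).congr (ae_of_all _ fun x => inner_conj_symm _ _)
  rw [Complex.ofReal_tsum]
  simp_rw [localizationOp_norm_sq_apply hL]
  rw [b.tsum_integral_inner_mul_inner hF.1 (fun f => (hmeas f).aestronglyMeasurable) hv hfin]
  congr with x
  rw [localizationOp_inner_adjoint_apply_self hL, ← integral_const_mul]
  congr with y
  ring

theorem localization_op_hilbertSchmidt_norm_formula
    {X : Type*} [MeasurableSpace X] (μ : Measure X) [SigmaFinite μ]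
    {H : Type*} [NormedAddCommGroup H] [InnerProductSpace ℂ H] [CompleteSpace H]
    [TopologicalSpace.SeparableSpace H]
    (φ : X → H) (c₁ : ℝ)
    (hmeas : ∀ f : H, Measurable fun x => ⟪φ x, f⟫)
    (hbdd : ∀ᵐ x ∂μ, ‖φ x‖ ≤ c₁)
    (F : X → ℂ) (hF : Integrable F μ)
    (L : H →L[ℂ] H)
    (hL : ∀ f g : H, ⟪g, L f⟫ = ∫ x, F x * ⟪φ x, f⟫ * ⟪g, φ x⟫ ∂μ) :
    ∀ {ι : Type} [Countable ι] (b : HilbertBasis ι ℂ H),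
      ((∑' i, ‖L (b i)‖ ^ 2 : ℝ) : ℂ)
        = ∫ x, ∫ y, F x * (‖⟪φ x, φ y⟫‖ : ℂ) ^ 2 * (starRingEnd ℂ) (F y) ∂μ ∂μ :=
  localization_op_hilbertSchmidt_norm_formula_general μ φ c₁ hmeas hbdd F hF L hL
end

section
/- It holds that sup{‖L_F‖_{HS}/‖F‖₂ : F ∈ L²(ℝ^{2d}), F ≠ 0} = 1; in particular, taking F = χ_{B_r}, the ratio ‖L_{χ_{B_r}}‖_{HS}/‖χ_{B_r}‖₂ tends to 1 as r → +∞. -/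
open MeasureTheory Filter

/-- The Hilbert-Schmidt norm of the Gaussian time-frequency localization operator `L_F`. -/
noncomputable def hsNorm {n : ℕ} (F : EuclideanSpace ℝ (Fin n) → ℂ) : ℝ :=
  Real.sqrt (∫ z, ∫ w, F z * Real.exp (-Real.pi * dist z w ^ 2) *
    (starRingEnd ℂ) (F w) : ℂ).re

/-! With `g x = exp (-π ‖x‖²)`, a probability density, `‖L_F‖²_HS` is the quadratic form
`∫∫ F z * g (z - w) * conj (F w)`. The pointwise bound `|F z| |F w| ≤ (|F z|² + |F w|²) / 2`
and `∫ g = 1` give `‖L_F‖²_HS ≤ ‖F‖₂²`. For `F = χ_{B_r}` the form is `∫_{B_r} ∫_{B_r} g (z - w)`;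
for `z ∈ B_{r-s}` the inner integral is at least `∫_{B_s} g`, so the squared ratio lies between
`(∫_{B_s} g) ((r - s) / r)ⁿ` and `1`. Letting `r → ∞` and then `s → ∞` gives the limit `1`, which
is therefore also the supremum. -/

open Metric Set
open scoped Topology ComplexConjugate

lemma norm_mul_ofReal_mul_conj_le (a b : ℂ) {k : ℝ} (hk : 0 ≤ k) :
    ‖a * k * conj b‖ ≤ (‖a‖ ^ 2 * k + ‖b‖ ^ 2 * k) / 2 := by
  rw [norm_mul, norm_mul, Complex.norm_conj, Complex.norm_real, Real.norm_of_nonneg hk]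
  nlinarith [sq_nonneg (‖a‖ - ‖b‖)]

section Lp

variable {α : Type*} [MeasurableSpace α] {μ : Measure α}

lemma toReal_eLpNorm_two {E : Type*} [NormedAddCommGroup E] {F : α → E} (hF : MemLp F 2 μ) :
    (eLpNorm F 2 μ).toReal = √(∫ z, ‖F z‖ ^ 2 ∂μ) := by
  rw [hF.eLpNorm_eq_integral_rpow_norm two_ne_zero ENNReal.ofNat_ne_top,
    ENNReal.toReal_ofReal (by positivity), Real.sqrt_eq_rpow]
  norm_num

lemma toReal_eLpNorm_indicator_one {S : Set α} (hS : MeasurableSet S) :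
    (eLpNorm (S.indicator fun _ => (1 : ℂ)) 2 μ).toReal = √(μ.real S) := by
  rw [eLpNorm_indicator_const hS two_ne_zero ENNReal.ofNat_ne_top, enorm_one, one_mul,
    ← ENNReal.toReal_rpow, Real.sqrt_eq_rpow, measureReal_def]
  norm_num

end Lp

lemma tendsto_measureReal_ball_sub_div {E : Type*} [NormedAddCommGroup E] [NormedSpace ℝ E]
    [MeasurableSpace E] [BorelSpace E] [FiniteDimensional ℝ E] (μ : Measure E)
    [μ.IsAddHaarMeasure] (s : ℝ) :
    Tendsto (fun r => μ.real (ball 0 (r - s)) / μ.real (ball 0 r)) atTop (𝓝 1) := by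
  have hbase : Tendsto (fun r : ℝ => 1 - s * r⁻¹) atTop (𝓝 1) := by
    simpa using tendsto_const_nhds.sub (tendsto_inv_atTop_zero.const_mul s)
  have hunit : μ.real (ball 0 1) ≠ 0 :=
    (ENNReal.toReal_pos (measure_ball_pos μ 0 one_pos).ne' measure_ball_lt_top.ne).ne'
  refine (one_pow (M := ℝ) (Module.finrank ℝ E) ▸ hbase.pow _).congr' ?_
  filter_upwards [eventually_gt_atTop (max s 0)] with r hr
  have hr0 : 0 < r := (le_max_right s 0).trans_lt hr
  have hrs : 0 < r - s := sub_pos.mpr ((le_max_left s 0).trans_lt hr)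
  rw [measureReal_def, measureReal_def, Measure.addHaar_ball_of_pos μ 0 hrs,
    Measure.addHaar_ball_of_pos μ 0 hr0, ENNReal.toReal_mul, ENNReal.toReal_mul,
    ENNReal.toReal_ofReal (by positivity), ENNReal.toReal_ofReal (by positivity),
    ← measureReal_def, mul_div_mul_right _ _ hunit, ← div_pow]
  congr 1
  field_simp

section GaussKernel

variable {V : Type*} [NormedAddCommGroup V]

noncomputable def gaussKernel (x : V) : ℝ := Real.exp (-Real.pi * ‖x‖ ^ 2)

lemma gaussKernel_nonneg (x : V) : 0 ≤ gaussKernel x := (Real.exp_pos _).le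

lemma gaussKernel_sub_comm (x y : V) : gaussKernel (x - y) = gaussKernel (y - x) := by
  rw [gaussKernel, gaussKernel, norm_sub_rev]

@[fun_prop]
lemma continuous_gaussKernel : Continuous (gaussKernel : V → ℝ) := by
  unfold gaussKernel
  fun_prop

variable [InnerProductSpace ℝ V] [FiniteDimensional ℝ V] [MeasurableSpace V] [BorelSpace V]

lemma integral_gaussKernel : ∫ x : V, gaussKernel x = 1 := by
  rw [show (gaussKernel : V → ℝ) = fun x => Real.exp (-Real.pi * ‖x‖ ^ 2) from rfl,
    GaussianFourier.integral_rexp_neg_mul_sq_norm Real.pi_pos, div_self Real.pi_ne_zero,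
    Real.one_rpow]

lemma integrable_gaussKernel : Integrable (gaussKernel : V → ℝ) :=
  Integrable.of_integral_ne_zero (by rw [integral_gaussKernel]; exact one_ne_zero)

lemma integral_gaussKernel_sub (z : V) : ∫ w, gaussKernel (z - w) = 1 := by
  rw [integral_sub_left_eq_self gaussKernel volume z, integral_gaussKernel]

lemma integrable_fst_mul_gaussKernel_sub {f : V → ℝ} (hf : Integrable f) :
    Integrable (fun p : V × V => f p.1 * gaussKernel (p.1 - p.2)) (volume.prod volume) :=
  ((measurePreserving_prod_sub volume volume).integrable_comp_of_integrable
    (hf.mul_prod integrable_gaussKernel)).congr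
    (.of_forall fun p => congrArg (f p.1 * ·) (gaussKernel_sub_comm _ _))

lemma integral_fst_mul_gaussKernel_sub (f : V → ℝ) :
    ∫ p : V × V, f p.1 * gaussKernel (p.1 - p.2) ∂(volume.prod volume) = ∫ z, f z :=
  calc _ = ∫ p : V × V, (fun q : V × V => f q.1 * gaussKernel q.2)
          (MeasurableEquiv.shearSubRight V p) ∂(volume.prod volume) :=
        integral_congr_ae (.of_forall fun p => congrArg (f p.1 * ·) (gaussKernel_sub_comm _ _))
    _ = ∫ q : V × V, f q.1 * gaussKernel q.2 ∂(volume.prod volume) :=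
        (measurePreserving_prod_sub volume volume).integral_comp'
          (f := MeasurableEquiv.shearSubRight V) fun q => f q.1 * gaussKernel q.2
    _ = ∫ z, f z := by rw [integral_prod_mul, integral_gaussKernel, mul_one]

lemma integrable_snd_mul_gaussKernel_sub {f : V → ℝ} (hf : Integrable f) :
    Integrable (fun p : V × V => f p.2 * gaussKernel (p.1 - p.2)) (volume.prod volume) :=
  (integrable_fst_mul_gaussKernel_sub hf).swap.congr
    (.of_forall fun p => congrArg (f p.2 * ·) (gaussKernel_sub_comm _ _))

lemma integral_snd_mul_gaussKernel_sub (f : V → ℝ) :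
    ∫ p : V × V, f p.2 * gaussKernel (p.1 - p.2) ∂(volume.prod volume) = ∫ z, f z := by
  rw [← integral_prod_swap, ← integral_fst_mul_gaussKernel_sub f]
  exact integral_congr_ae (.of_forall fun p => congrArg (f p.1 * ·) (gaussKernel_sub_comm _ _))

noncomputable def gaussForm (F : V → ℂ) : ℂ := ∫ z, ∫ w, F z * gaussKernel (z - w) * conj (F w)

lemma integrable_gaussForm_integrand {F : V → ℂ} (hF : MemLp F 2) :
    Integrable (fun p : V × V => F p.1 * gaussKernel (p.1 - p.2) * conj (F p.2))
      (volume.prod volume) := by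
  have hF2 : Integrable (fun z => ‖F z‖ ^ 2) := hF.integrable_norm_pow two_ne_zero
  have hg : Continuous fun p : V × V => (gaussKernel (p.1 - p.2) : ℂ) := by fun_prop
  refine (((integrable_fst_mul_gaussKernel_sub hF2).add
    (integrable_snd_mul_gaussKernel_sub hF2)).div_const 2).mono' ?_
    (.of_forall fun p => norm_mul_ofReal_mul_conj_le _ _ (gaussKernel_nonneg _))
  exact (hF.1.comp_fst.mul hg.aestronglyMeasurable).mul
    (Complex.continuous_conj.comp_aestronglyMeasurable hF.1).comp_snd

lemma re_gaussForm_le {F : V → ℂ} (hF : MemLp F 2) : (gaussForm F).re ≤ ∫ z, ‖F z‖ ^ 2 := by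
  have hF2 : Integrable (fun z => ‖F z‖ ^ 2) := hF.integrable_norm_pow two_ne_zero
  rw [gaussForm, integral_integral (integrable_gaussForm_integrand hF)]
  calc _ ≤ ‖∫ p : V × V, F p.1 * gaussKernel (p.1 - p.2) * conj (F p.2)
          ∂(volume.prod volume)‖ := Complex.re_le_norm _
    _ ≤ ∫ p : V × V, (‖F p.1‖ ^ 2 * gaussKernel (p.1 - p.2) +
          ‖F p.2‖ ^ 2 * gaussKernel (p.1 - p.2)) / 2 ∂(volume.prod volume) :=
        norm_integral_le_of_norm_le (((integrable_fst_mul_gaussKernel_sub hF2).add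
          (integrable_snd_mul_gaussKernel_sub hF2)).div_const 2)
          (.of_forall fun p => norm_mul_ofReal_mul_conj_le _ _ (gaussKernel_nonneg _))
    _ = ∫ z, ‖F z‖ ^ 2 := by
        rw [integral_div, integral_add (integrable_fst_mul_gaussKernel_sub hF2)
          (integrable_snd_mul_gaussKernel_sub hF2), integral_fst_mul_gaussKernel_sub (‖F ·‖ ^ 2),
          integral_snd_mul_gaussKernel_sub (‖F ·‖ ^ 2), add_self_div_two]

noncomputable def gaussEnergy (S : Set V) : ℝ := ∫ z in S, ∫ w in S, gaussKernel (z - w)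

lemma gaussForm_indicator_one {S : Set V} (hS : MeasurableSet S) :
    gaussForm (S.indicator fun _ => (1 : ℂ)) = gaussEnergy S := by
  have hinner : ∀ z, ∫ w, S.indicator (fun _ => (1 : ℂ)) z * gaussKernel (z - w) *
      conj (S.indicator (fun _ => (1 : ℂ)) w) =
        S.indicator (fun z => ∫ w in S, (gaussKernel (z - w) : ℂ)) z := by
    intro z
    by_cases hz : z ∈ S
    · rw [indicator_of_mem hz, indicator_of_mem hz, ← integral_indicator hS]
      congr with w
      by_cases hw : w ∈ S <;> simp [hw]
    · simp [hz]
  simp_rw [gaussForm, hinner, integral_indicator hS, integral_complex_ofReal, gaussEnergy]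

lemma setIntegral_gaussKernel_sub_nonneg (S : Set V) (z : V) :
    0 ≤ ∫ w in S, gaussKernel (z - w) :=
  integral_nonneg fun _ => gaussKernel_nonneg _

lemma setIntegral_gaussKernel_sub_le_one (S : Set V) (z : V) :
    ∫ w in S, gaussKernel (z - w) ≤ 1 :=
  integral_gaussKernel_sub z ▸ setIntegral_le_integral (integrable_gaussKernel.comp_sub_left z)
    (.of_forall fun _ => gaussKernel_nonneg _)

lemma integrableOn_setIntegral_gaussKernel_sub (S : Set V) {T : Set V} (hT : volume T ≠ ⊤) :
    IntegrableOn (fun z => ∫ w in S, gaussKernel (z - w)) T := by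
  have hmeas : StronglyMeasurable fun z => ∫ w in S, gaussKernel (z - w) :=
    .integral_prod_right (f := fun z w => gaussKernel (z - w))
      (continuous_gaussKernel.comp (continuous_fst.sub continuous_snd)).stronglyMeasurable
  refine Measure.integrableOn_of_bounded hT hmeas.aestronglyMeasurable (M := 1)
    (.of_forall fun z => ?_)
  rw [Real.norm_of_nonneg (setIntegral_gaussKernel_sub_nonneg S z)]
  exact setIntegral_gaussKernel_sub_le_one S z

lemma gaussEnergy_nonneg (S : Set V) : 0 ≤ gaussEnergy S :=
  integral_nonneg fun z => setIntegral_gaussKernel_sub_nonneg S z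

lemma gaussEnergy_le_measureReal {S : Set V} (hS : volume S ≠ ⊤) :
    gaussEnergy S ≤ volume.real S := by
  simpa [gaussEnergy] using setIntegral_mono (integrableOn_setIntegral_gaussKernel_sub S hS)
    (integrableOn_const hS) fun z => setIntegral_gaussKernel_sub_le_one S z

lemma setIntegral_ball_gaussKernel_le {r s : ℝ} {z : V} (hz : z ∈ ball 0 (r - s)) :
    ∫ x in ball (0 : V) s, gaussKernel x ≤ ∫ w in ball 0 r, gaussKernel (z - w) := by
  have hpre : (fun w => z - w) ⁻¹' ball 0 s = ball z s := by
    ext w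
    simp [dist_eq_norm, norm_sub_rev]
  have htranslate := (Measure.measurePreserving_sub_left volume z).setIntegral_preimage_emb
    (MeasurableEquiv.subLeft z).measurableEmbedding gaussKernel (ball 0 s)
  rw [hpre] at htranslate
  rw [← htranslate]
  refine setIntegral_mono_set (integrable_gaussKernel.comp_sub_left z).integrableOn
    (.of_forall fun _ => gaussKernel_nonneg _) (ball_subset_ball' ?_).eventuallyLE
  rw [mem_ball] at hz
  linarith

lemma setIntegral_ball_gaussKernel_mul_le_gaussEnergy {s : ℝ} (hs : 0 ≤ s) (r : ℝ) :
    (∫ x in ball (0 : V) s, gaussKernel x) * volume.real (ball (0 : V) (r - s)) ≤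
      gaussEnergy (ball (0 : V) r) :=
  calc _ = ∫ _ in ball (0 : V) (r - s), ∫ x in ball (0 : V) s, gaussKernel x := by
        rw [setIntegral_const, smul_eq_mul, mul_comm]
    _ ≤ ∫ z in ball (0 : V) (r - s), ∫ w in ball 0 r, gaussKernel (z - w) :=
        setIntegral_mono_on (integrableOn_const measure_ball_lt_top.ne)
          (integrableOn_setIntegral_gaussKernel_sub _ measure_ball_lt_top.ne) measurableSet_ball
          fun _ hz => setIntegral_ball_gaussKernel_le hz
    _ ≤ gaussEnergy (ball (0 : V) r) :=
        setIntegral_mono_set (integrableOn_setIntegral_gaussKernel_sub _ measure_ball_lt_top.ne)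
          (.of_forall fun z => setIntegral_gaussKernel_sub_nonneg _ z)
          (ball_subset_ball (by linarith)).eventuallyLE

lemma tendsto_setIntegral_ball_gaussKernel :
    Tendsto (fun s : ℝ => ∫ x in ball (0 : V) s, gaussKernel x) atTop (𝓝 1) := by
  have h := tendsto_setIntegral_of_monotone (μ := volume) (s := fun s : ℝ => ball (0 : V) s)
    (fun _ => measurableSet_ball) (fun _ _ h => ball_subset_ball h)
    integrable_gaussKernel.integrableOn
  rwa [iUnion_eq_univ_iff.2 fun x => ⟨dist x 0 + 1, mem_ball.2 (lt_add_one _)⟩,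
    setIntegral_univ, integral_gaussKernel] at h

lemma tendsto_gaussEnergy_ball_div :
    Tendsto (fun r => gaussEnergy (ball (0 : V) r) / volume.real (ball (0 : V) r)) atTop
      (𝓝 1) := by
  refine tendsto_order.2 ⟨fun a ha => ?_, fun a ha => .of_forall fun r => ?_⟩
  · obtain ⟨s, has, hs⟩ := ((tendsto_setIntegral_ball_gaussKernel (V := V)).eventually
      (eventually_gt_nhds ha)).and (eventually_ge_atTop 0) |>.exists
    have hlim := (tendsto_measureReal_ball_sub_div (volume : Measure V) s).const_mul
      (∫ x in ball (0 : V) s, gaussKernel x)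
    rw [mul_one] at hlim
    filter_upwards [hlim.eventually (eventually_gt_nhds has)] with r hr
    refine hr.trans_le ?_
    rw [← mul_div_assoc]
    exact div_le_div_of_nonneg_right (setIntegral_ball_gaussKernel_mul_le_gaussEnergy hs r)
      measureReal_nonneg
  · exact (div_le_one_of_le₀ (gaussEnergy_le_measureReal measure_ball_lt_top.ne)
      measureReal_nonneg).trans_lt ha

end GaussKernel

section HSNorm

variable {n : ℕ}

lemma hsNorm_eq_sqrt_re_gaussForm (F : EuclideanSpace ℝ (Fin n) → ℂ) :
    hsNorm F = √(gaussForm F).re := by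
  simp [hsNorm, gaussForm, gaussKernel, dist_eq_norm]

lemma hsNorm_le_toReal_eLpNorm {F : EuclideanSpace ℝ (Fin n) → ℂ} (hF : MemLp F 2) :
    hsNorm F ≤ (eLpNorm F 2 volume).toReal := by
  rw [hsNorm_eq_sqrt_re_gaussForm, toReal_eLpNorm_two hF]
  exact Real.sqrt_le_sqrt (re_gaussForm_le hF)

lemma hsNorm_div_toReal_eLpNorm_indicator_one {S : Set (EuclideanSpace ℝ (Fin n))}
    (hS : MeasurableSet S) :
    hsNorm (S.indicator fun _ => (1 : ℂ)) /
        (eLpNorm (S.indicator fun _ => (1 : ℂ)) 2 volume).toReal =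
      √(gaussEnergy S / volume.real S) := by
  rw [hsNorm_eq_sqrt_re_gaussForm, gaussForm_indicator_one hS, Complex.ofReal_re,
    toReal_eLpNorm_indicator_one hS, Real.sqrt_div (gaussEnergy_nonneg _)]

end HSNorm

theorem sup_hs_norm_ratio_eq_one_general (d : ℕ) :
    IsLUB {t : ℝ | ∃ F : EuclideanSpace ℝ (Fin (2 * d)) → ℂ,
        MemLp F 2 volume ∧ ¬ F =ᵐ[volume] 0 ∧
        t = hsNorm F / (eLpNorm F 2 volume).toReal} 1 ∧
      Tendsto (fun r : ℝ =>
          hsNorm ((Metric.ball (0 : EuclideanSpace ℝ (Fin (2 * d))) r).indicator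
              fun _ => (1 : ℂ)) /
            (eLpNorm ((Metric.ball (0 : EuclideanSpace ℝ (Fin (2 * d))) r).indicator
              fun _ => (1 : ℂ)) 2 volume).toReal)
        atTop (nhds 1) := by
  have hball : Tendsto (fun r : ℝ =>
      hsNorm ((ball (0 : EuclideanSpace ℝ (Fin (2 * d))) r).indicator fun _ => (1 : ℂ)) /
        (eLpNorm ((ball (0 : EuclideanSpace ℝ (Fin (2 * d))) r).indicator fun _ => (1 : ℂ))
          2 volume).toReal) atTop (𝓝 1) := by
    simp_rw [hsNorm_div_toReal_eLpNorm_indicator_one measurableSet_ball]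
    simpa using tendsto_gaussEnergy_ball_div.sqrt
  refine ⟨⟨?_, fun b hb => le_of_tendsto hball ?_⟩, hball⟩
  · rintro t ⟨F, hF, -, rfl⟩
    exact div_le_one_of_le₀ (hsNorm_le_toReal_eLpNorm hF) ENNReal.toReal_nonneg
  · filter_upwards [eventually_gt_atTop 0] with r hr
    have hne : ¬ (ball (0 : EuclideanSpace ℝ (Fin (2 * d))) r).indicator (fun _ => (1 : ℂ))
        =ᵐ[volume] 0 := by
      rw [indicator_ae_eq_zero, Function.support_const one_ne_zero, inter_univ]
      exact (measure_ball_pos volume 0 hr).ne'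
    exact hb ⟨_, memLp_indicator_const 2 measurableSet_ball 1 (.inr measure_ball_lt_top.ne),
      hne, rfl⟩

theorem sup_hs_norm_ratio_eq_one (d : ℕ) (hd : 0 < d) :
    IsLUB {t : ℝ | ∃ F : EuclideanSpace ℝ (Fin (2 * d)) → ℂ,
        MemLp F 2 volume ∧ ¬ F =ᵐ[volume] 0 ∧
        t = hsNorm F / (eLpNorm F 2 volume).toReal} 1 ∧
      Tendsto (fun r : ℝ =>
          hsNorm ((Metric.ball (0 : EuclideanSpace ℝ (Fin (2 * d))) r).indicator
              fun _ => (1 : ℂ)) /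
            (eLpNorm ((Metric.ball (0 : EuclideanSpace ℝ (Fin (2 * d))) r).indicator
              fun _ => (1 : ℂ)) 2 volume).toReal)
        atTop (nhds 1) :=
  sup_hs_norm_ratio_eq_one_general d
end

section
/- Let Ω_r¹ = {z ∈ ℝ^{2d} : r/3 ≤ |z| ≤ r} and B_{r/3} the centered ball of radius r/3. Then the convolution satisfies (χ_{Ω_r¹} * χ_{B_{r/3}})(z) ≤ c r^{2d−1} min{|z|, 2r/3} for all z ∈ ℝ^{2d}, where c depends only on d; consequently ∫_{ℝ^{2d}} e^{-π|z|²}(χ_{Ω_r¹} * χ_{B_{r/3}})(z) dz ≤ c' r^{2d−1}. -/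
/-!
A point of the annulus `r / 3 ≤ ‖w‖ ≤ r` at distance `< r / 3` from `z` has norm at most
`min r (r / 3 + ‖z‖) = r / 3 + s` with `s = min ‖z‖ (2 * r / 3)`, so the overlap lies in a thinner
annulus, of volume `ω ((r / 3 + s) ^ n - (r / 3) ^ n) ≤ n ω r ^ (n - 1) s`. For the Gaussian
average, bound `s` by `‖z‖` and absorb that factor into the Gaussian via `t ≤ exp (t ^ 2)`.
-/

open MeasureTheory Measure Metric Module Real

theorem pow_sub_pow_le_of_le {a b : ℝ} (hb : 0 ≤ b) (hba : b ≤ a) (n : ℕ) :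
    a ^ n - b ^ n ≤ n * a ^ (n - 1) * (a - b) := by
  have h := abs_pow_sub_pow_le a b n
  rw [abs_of_nonneg (sub_nonneg.2 hba), abs_of_nonneg (hb.trans hba), abs_of_nonneg hb,
    max_eq_left hba] at h
  linarith [le_abs_self (a ^ n - b ^ n)]

theorem annulus_inter_ball_subset {E : Type*} [SeminormedAddCommGroup E] (a b : ℝ) (z : E) :
    {w : E | b ≤ ‖w‖ ∧ ‖w‖ ≤ a} ∩ {w | ‖z - w‖ < b} ⊆
      closedBall 0 (min a (b + ‖z‖)) \ ball 0 b := by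
  rintro w ⟨⟨hbw, hwa⟩, hzw : ‖z - w‖ < b⟩
  simp only [Set.mem_sdiff, mem_closedBall, mem_ball, dist_zero_right, not_lt]
  refine ⟨le_min hwa ?_, hbw⟩
  linarith [norm_sub_norm_le w z, norm_sub_rev z w]

section Annulus

variable {E : Type*} [NormedAddCommGroup E] [NormedSpace ℝ E] [MeasurableSpace E] [BorelSpace E]
  [FiniteDimensional ℝ E] (μ : Measure E) [μ.IsAddHaarMeasure]

theorem measureReal_closedBall_sdiff_ball (x : E) {a b : ℝ} (hb : 0 < b) (hba : b ≤ a) :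
    μ.real (closedBall x a \ ball x b) =
      (a ^ finrank ℝ E - b ^ finrank ℝ E) * μ.real (ball 0 1) := by
  rw [measureReal_sdiff (ball_subset_closedBall.trans (closedBall_subset_closedBall hba))
      measurableSet_ball measure_closedBall_lt_top.ne,
    addHaar_real_closedBall μ x (hb.le.trans hba), measureReal_def μ (ball x b),
    addHaar_ball_of_pos μ x hb, ENNReal.toReal_mul, ENNReal.toReal_ofReal (by positivity),
    ← measureReal_def]
  ring

theorem measureReal_closedBall_sdiff_ball_le (x : E) {a b : ℝ} (hb : 0 < b) (hba : b ≤ a) :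
    μ.real (closedBall x a \ ball x b) ≤
      finrank ℝ E * μ.real (ball (0 : E) 1) * a ^ (finrank ℝ E - 1) * (a - b) := by
  rw [measureReal_closedBall_sdiff_ball μ x hb hba]
  calc _ ≤ finrank ℝ E * a ^ (finrank ℝ E - 1) * (a - b) * μ.real (ball (0 : E) 1) := by
        gcongr
        exact pow_sub_pow_le_of_le hb.le hba _
    _ = _ := by ring

theorem measureReal_annulus_inter_ball_le (z : E) {a b : ℝ} (hb : 0 < b) (hba : b ≤ a) :
    μ.real ({w : E | b ≤ ‖w‖ ∧ ‖w‖ ≤ a} ∩ {w | ‖z - w‖ < b}) ≤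
      finrank ℝ E * μ.real (ball (0 : E) 1) * a ^ (finrank ℝ E - 1) * min ‖z‖ (a - b) := by
  set a' := min a (b + ‖z‖)
  have hba' : b ≤ a' := le_min hba (by linarith [norm_nonneg z])
  calc _ ≤ μ.real (closedBall 0 a' \ ball 0 b) :=
        measureReal_mono (annulus_inter_ball_subset a b z)
          (measure_ne_top_of_subset Set.sdiff_subset measure_closedBall_lt_top.ne)
    _ ≤ finrank ℝ E * μ.real (ball (0 : E) 1) * a' ^ (finrank ℝ E - 1) * (a' - b) :=
        measureReal_closedBall_sdiff_ball_le μ 0 hb hba'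
    _ ≤ finrank ℝ E * μ.real (ball (0 : E) 1) * a ^ (finrank ℝ E - 1) * (a' - b) := by
        have : 0 ≤ a' - b := sub_nonneg.2 hba'
        gcongr
        · linarith
        · exact min_le_left _ _
    _ = _ := by rw [← min_sub_sub_right, add_sub_cancel_left, min_comm]

end Annulus

theorem integrable_exp_neg_mul_sq_norm {V : Type*} [NormedAddCommGroup V] [InnerProductSpace ℝ V]
    [FiniteDimensional ℝ V] [MeasurableSpace V] [BorelSpace V] {b : ℝ} (hb : 0 < b) :
    Integrable fun v : V => exp (-b * ‖v‖ ^ 2) :=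
  Integrable.of_integral_ne_zero <| by
    rw [GaussianFourier.integral_rexp_neg_mul_sq_norm hb]; positivity

theorem mul_exp_neg_mul_sq_le (b t : ℝ) : t * exp (-b * t ^ 2) ≤ exp (-(b - 1) * t ^ 2) := by
  have ht : t ≤ exp (t ^ 2) := by nlinarith [add_one_le_exp (t ^ 2), sq_nonneg (t - 1)]
  calc t * exp (-b * t ^ 2) ≤ exp (t ^ 2) * exp (-b * t ^ 2) := by gcongr
    _ = exp (-(b - 1) * t ^ 2) := by rw [← exp_add]; ring_nf

theorem integral_exp_neg_mul_sq_norm_mul_le {V : Type*} [NormedAddCommGroup V]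
    [InnerProductSpace ℝ V] [FiniteDimensional ℝ V] [MeasurableSpace V] [BorelSpace V]
    {b A : ℝ} (hb : 1 < b) (hA : 0 ≤ A) {F : V → ℝ} (hF₀ : ∀ v, 0 ≤ F v)
    (hF : ∀ v, F v ≤ A * ‖v‖) :
    ∫ v, exp (-b * ‖v‖ ^ 2) * F v ≤ A * (π / (b - 1)) ^ (finrank ℝ V / 2 : ℝ) := by
  have hb₁ : 0 < b - 1 := sub_pos.2 hb
  have hpointwise (v : V) : exp (-b * ‖v‖ ^ 2) * F v ≤ A * exp (-(b - 1) * ‖v‖ ^ 2) :=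
    calc exp (-b * ‖v‖ ^ 2) * F v ≤ exp (-b * ‖v‖ ^ 2) * (A * ‖v‖) := by gcongr; exact hF v
      _ = A * (‖v‖ * exp (-b * ‖v‖ ^ 2)) := by ring
      _ ≤ A * exp (-(b - 1) * ‖v‖ ^ 2) := by gcongr; exact mul_exp_neg_mul_sq_le b ‖v‖
  calc ∫ v, exp (-b * ‖v‖ ^ 2) * F v ≤ ∫ v, A * exp (-(b - 1) * ‖v‖ ^ 2) :=
        integral_mono_of_nonneg (ae_of_all _ fun v => mul_nonneg (exp_pos _).le (hF₀ v))
          ((integrable_exp_neg_mul_sq_norm hb₁).const_mul A) (ae_of_all _ hpointwise)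
    _ = A * (π / (b - 1)) ^ (finrank ℝ V / 2 : ℝ) := by
        rw [integral_const_mul, GaussianFourier.integral_rexp_neg_mul_sq_norm hb₁]

theorem annulus_ball_convolution_bound (d : ℕ) (hd : 0 < d) :
    (∃ c > (0 : ℝ), ∀ r : ℝ, 0 < r → ∀ z : EuclideanSpace ℝ (Fin (2 * d)),
        (volume ({w : EuclideanSpace ℝ (Fin (2 * d)) | r / 3 ≤ ‖w‖ ∧ ‖w‖ ≤ r}
            ∩ {w | ‖z - w‖ < r / 3})).toReal
          ≤ c * r ^ (2 * d - 1) * min ‖z‖ (2 * r / 3)) ∧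
      ∃ c' > (0 : ℝ), ∀ r : ℝ, 0 < r →
        (∫ z : EuclideanSpace ℝ (Fin (2 * d)),
            Real.exp (-Real.pi * ‖z‖ ^ 2) *
              (volume ({w : EuclideanSpace ℝ (Fin (2 * d)) | r / 3 ≤ ‖w‖ ∧ ‖w‖ ≤ r}
                ∩ {w | ‖z - w‖ < r / 3})).toReal)
          ≤ c' * r ^ (2 * d - 1) := by
  set E := EuclideanSpace ℝ (Fin (2 * d))
  have hdim : finrank ℝ E = 2 * d := finrank_euclideanSpace_fin
  set c : ℝ := (2 * d : ℕ) * volume.real (ball (0 : E) 1)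
  have hball : 0 < volume.real (ball (0 : E) 1) :=
    ENNReal.toReal_pos (measure_ball_pos volume (0 : E) one_pos).ne' measure_ball_lt_top.ne
  have hc : 0 < c := by positivity
  have hpointwise (r : ℝ) (hr : 0 < r) (z : E) :
      volume.real ({w : E | r / 3 ≤ ‖w‖ ∧ ‖w‖ ≤ r} ∩ {w | ‖z - w‖ < r / 3})
        ≤ c * r ^ (2 * d - 1) * min ‖z‖ (2 * r / 3) := by
    have h := measureReal_annulus_inter_ball_le volume z (by positivity : 0 < r / 3)
      (by linarith : r / 3 ≤ r)
    rwa [hdim, show r - r / 3 = 2 * r / 3 by ring] at h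
  have hπ : 1 < π := by linarith [pi_gt_three]
  have hπ₁ : 0 < π - 1 := sub_pos.2 hπ
  refine ⟨⟨c, hc, hpointwise⟩, c * (π / (π - 1)) ^ ((2 * d : ℕ) / 2 : ℝ), by positivity,
    fun r hr => ?_⟩
  have h := integral_exp_neg_mul_sq_norm_mul_le (V := E) hπ
    (by positivity : 0 ≤ c * r ^ (2 * d - 1)) (fun z => measureReal_nonneg)
    (fun z => (hpointwise r hr z).trans (by gcongr; exact min_le_left _ _))
  rw [hdim] at h
  exact h.trans_eq (by ring)
end
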